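/- Let 𝔡 be a derivation of a finitely generated k-algebra R and k ≥ 0 an integer. Then there is a unique derivation 𝔡^{(k)} of the arc ring J^∞(R) satisfying 𝔡^{(k)}(r^{(j)}) = (𝔡 r)^{(j−k)} for all r ∈ R and j ≥ 0 (with negative-index coefficients zero). Moreover, for derivations 𝔡₁, 𝔡₂ and integers k₁, k₂ ≥ 0 one has [𝔡₁^{(k₁)}, 𝔡₂^{(k₂)}] = [𝔡₁, 𝔡₂]^{(k₁+k₂)}, so the current Lie algebra Der(R)[s] acts on J^∞(R) by derivations. -/

import Mathlib

set_option synthInstance.maxHeartbeats 1000000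
set_option maxHeartbeats 1000000

open MvPolynomial

/-- The universal arc series `f(X₁(s),…)` of a polynomial `f`. -/
noncomputable def arcSeries {𝕜 : Type*} [CommRing 𝕜] {σ : Type*}
    (f : MvPolynomial σ 𝕜) : PowerSeries (MvPolynomial (σ × ℕ) 𝕜) :=
  MvPolynomial.aeval (fun i : σ => PowerSeries.mk fun j : ℕ => MvPolynomial.X (i, j)) f

/-- The `n`-th `s`-coefficient of the arc series of `f`. -/
noncomputable def arcCoeff {𝕜 : Type*} [CommRing 𝕜] {σ : Type*}
    (f : MvPolynomial σ 𝕜) (n : ℕ) : MvPolynomial (σ × ℕ) 𝕜 :=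
  PowerSeries.coeff n (arcSeries f)

/-- The defining ideal of the arc ring of `𝕜[Xᵢ]/(S)`. -/
noncomputable def arcIdeal {𝕜 : Type*} [CommRing 𝕜] {σ : Type*}
    (S : Set (MvPolynomial σ 𝕜)) : Ideal (MvPolynomial (σ × ℕ) 𝕜) :=
  Ideal.span {g | ∃ f ∈ S, ∃ n : ℕ, g = arcCoeff f n}

/-- The characterizing property of the lifted derivation `𝔡^{(k)}` on the arc ring
`J^∞(R)`, `R = 𝕜[X₁,…,X_m]/I`: it sends `r^{(j)}` to `(𝔡 r)^{(j−k)}` (zero for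
`j < k`), where arc coefficients are computed from arbitrary representatives. -/
def IsArcCurrentLift {𝕜 : Type*} [Field 𝕜] {m : ℕ}
    (I : Ideal (MvPolynomial (Fin m) 𝕜))
    (𝔡 : Derivation 𝕜 (MvPolynomial (Fin m) 𝕜 ⧸ I) (MvPolynomial (Fin m) 𝕜 ⧸ I))
    (k : ℕ)
    (D : Derivation 𝕜
      (MvPolynomial (Fin m × ℕ) 𝕜 ⧸ arcIdeal (I : Set (MvPolynomial (Fin m) 𝕜)))
      (MvPolynomial (Fin m × ℕ) 𝕜 ⧸ arcIdeal (I : Set (MvPolynomial (Fin m) 𝕜)))) :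
    Prop :=
  ∀ (p q : MvPolynomial (Fin m) 𝕜) (j : ℕ),
    Ideal.Quotient.mk I q = 𝔡 (Ideal.Quotient.mk I p) →
    D (Ideal.Quotient.mk _ (arcCoeff p j)) =
      if k ≤ j then
        Ideal.Quotient.mk (arcIdeal (I : Set (MvPolynomial (Fin m) 𝕜)))
          (arcCoeff q (j - k))
      else 0

/-!
Choose lifts `q i ∈ 𝕜[X]` of `𝔡 (X i)`. The derivation of `𝕜[X_{i,j}]` sending `X_{i,j}` to
`(q i)^{(j-k)}`, applied coefficientwise to the universal arc series, sends `f(s)` to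
`s^k (𝔡 f)(s)`: both sides are derivations along `f ↦ f(s)` agreeing on the generators. So it
maps `f^{(j)}` to `(𝔡 f)^{(j-k)}`, hence preserves the arc ideal and descends to `J^∞(R)`.
Uniqueness holds because the `X_{i,j}` generate `J^∞(R)`; the bracket relation follows by
checking that `⁅D₁, D₂⁆` has the defining property of `[𝔡₁, 𝔡₂]^{(k₁+k₂)}`.
-/

namespace Derivation

variable {R A : Type*} [CommRing R] [CommRing A] [Algebra R A]

noncomputable def powerSeriesMapCoeffs (d : Derivation R A A) :
    Derivation R (PowerSeries A) (PowerSeries A) :=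
  Derivation.mk'
    { toFun := fun φ => PowerSeries.mk fun n => d (PowerSeries.coeff n φ)
      map_add' := fun φ ψ => by ext; simp
      map_smul' := fun r φ => by ext; simp }
    (fun φ ψ => by
      ext n
      simp only [LinearMap.coe_mk, AddHom.coe_mk, PowerSeries.coeff_mk, PowerSeries.coeff_mul,
        map_sum, leibniz, smul_eq_mul, Finset.sum_add_distrib, map_add]
      rw [← Finset.Nat.sum_antidiagonal_swap (f := fun p => PowerSeries.coeff p.1 ψ * _)]
      rfl)

@[simp]
lemma coeff_powerSeriesMapCoeffs (d : Derivation R A A) (φ : PowerSeries A) (n : ℕ) :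
    PowerSeries.coeff n (d.powerSeriesMapCoeffs φ) = d (PowerSeries.coeff n φ) := by
  simp [powerSeriesMapCoeffs]

lemma map_mem_ideal_span (d : Derivation R A A) {s : Set A} (hs : ∀ x ∈ s, d x ∈ Ideal.span s)
    {a : A} (ha : a ∈ Ideal.span s) : d a ∈ Ideal.span s := by
  induction ha using Submodule.span_induction with
  | mem x hx => exact hs x hx
  | zero => simp
  | add x y _ _ hx hy => simpa using add_mem hx hy
  | smul c x hx ih =>
    rw [smul_eq_mul, leibniz, smul_eq_mul, smul_eq_mul]
    exact add_mem (Ideal.mul_mem_left _ _ ih) (Ideal.mul_mem_right _ _ hx)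

end Derivation

section Quotient

variable {R σ : Type*} [CommRing R] {I : Ideal (MvPolynomial σ R)}

lemma MvPolynomial.derivation_quotient_ext
    {D₁ D₂ : Derivation R (MvPolynomial σ R ⧸ I) (MvPolynomial σ R ⧸ I)}
    (h : ∀ i, D₁ (Ideal.Quotient.mk I (X i)) = D₂ (Ideal.Quotient.mk I (X i))) : D₁ = D₂ := by
  have hcomp : D₁.compAlgebraMap (MvPolynomial σ R) = D₂.compAlgebraMap (MvPolynomial σ R) :=
    MvPolynomial.derivation_ext h
  ext x
  obtain ⟨p, rfl⟩ := Ideal.Quotient.mk_surjective x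
  exact congr($hcomp p)

lemma mk_mkDerivation {𝔡 : Derivation R (MvPolynomial σ R ⧸ I) (MvPolynomial σ R ⧸ I)}
    {q : σ → MvPolynomial σ R}
    (hq : ∀ i, Ideal.Quotient.mk I (q i) = 𝔡 (Ideal.Quotient.mk I (X i)))
    (f : MvPolynomial σ R) :
    Ideal.Quotient.mk I (mkDerivation R q f) = 𝔡 (Ideal.Quotient.mk I f) := by
  have h : (Algebra.linearMap (MvPolynomial σ R) (MvPolynomial σ R ⧸ I)).compDer
      (mkDerivation R q) = 𝔡.compAlgebraMap (MvPolynomial σ R) :=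
    MvPolynomial.derivation_ext fun i => by simpa using hq i
  exact congr($h f)

end Quotient

section Arc

variable {𝕜 σ : Type*} [CommRing 𝕜]

lemma arcSeries_X (i : σ) :
    arcSeries (X i : MvPolynomial σ 𝕜) = PowerSeries.mk fun j => X (i, j) := by
  simp [arcSeries]

lemma arcCoeff_X (i : σ) (j : ℕ) : arcCoeff (X i : MvPolynomial σ 𝕜) j = X (i, j) := by
  simp [arcCoeff, arcSeries_X]

lemma arcCoeff_sub (f g : MvPolynomial σ 𝕜) (n : ℕ) :
    arcCoeff (f - g) n = arcCoeff f n - arcCoeff g n := by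
  simp [arcCoeff, arcSeries]

lemma arcCoeff_mem_arcIdeal {S : Set (MvPolynomial σ 𝕜)} {f : MvPolynomial σ 𝕜} (hf : f ∈ S)
    (n : ℕ) : arcCoeff f n ∈ arcIdeal S :=
  Ideal.subset_span ⟨f, hf, n, rfl⟩

/-- The derivation `𝔡^{(k)}` of `J^∞(𝕜[σ])` for `𝔡 = mkDerivation 𝕜 q`. -/
noncomputable def arcDerivation (k : ℕ) (q : σ → MvPolynomial σ 𝕜) :
    Derivation 𝕜 (MvPolynomial (σ × ℕ) 𝕜) (MvPolynomial (σ × ℕ) 𝕜) :=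
  mkDerivation 𝕜 fun v => if k ≤ v.2 then arcCoeff (q v.1) (v.2 - k) else 0

lemma powerSeriesMapCoeffs_arcDerivation_arcSeries (k : ℕ) (q : σ → MvPolynomial σ 𝕜)
    (f : MvPolynomial σ 𝕜) :
    (arcDerivation k q).powerSeriesMapCoeffs (arcSeries f) =
      PowerSeries.X ^ k * arcSeries (mkDerivation 𝕜 q f) := by
  induction f using MvPolynomial.induction_on with
  | C a => simp [arcSeries]
  | add f g hf hg => simp only [arcSeries, map_add, mul_add] at hf hg ⊢; rw [hf, hg]
  | mul_X f i hf =>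
    have hX : (arcDerivation k q).powerSeriesMapCoeffs (arcSeries (X i)) =
        PowerSeries.X ^ k * arcSeries (q i) := by
      ext n
      simp [arcSeries_X, arcDerivation, PowerSeries.coeff_X_pow_mul', arcCoeff]
    simp only [arcSeries, map_mul, Derivation.leibniz, mkDerivation_X,
      smul_eq_mul, map_add] at hf hX ⊢
    rw [hf, hX]
    ring

lemma arcDerivation_arcCoeff (k : ℕ) (q : σ → MvPolynomial σ 𝕜) (f : MvPolynomial σ 𝕜)
    (n : ℕ) :
    arcDerivation k q (arcCoeff f n) =
      if k ≤ n then arcCoeff (mkDerivation 𝕜 q f) (n - k) else 0 := by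
  simpa [arcCoeff, PowerSeries.coeff_X_pow_mul'] using
    congr(PowerSeries.coeff n $(powerSeriesMapCoeffs_arcDerivation_arcSeries k q f))

end Arc

section ArcQuotient

variable {𝕜 σ : Type*} [CommRing 𝕜] {I : Ideal (MvPolynomial σ 𝕜)}

lemma mk_arcCoeff_eq_of_mk_eq {f g : MvPolynomial σ 𝕜}
    (h : Ideal.Quotient.mk I f = Ideal.Quotient.mk I g) (n : ℕ) :
    Ideal.Quotient.mk (arcIdeal (I : Set (MvPolynomial σ 𝕜))) (arcCoeff f n) =
      Ideal.Quotient.mk (arcIdeal (I : Set (MvPolynomial σ 𝕜))) (arcCoeff g n) := by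
  rw [Ideal.Quotient.eq, ← arcCoeff_sub]
  exact arcCoeff_mem_arcIdeal (Ideal.Quotient.eq.mp h) n

lemma arcDerivation_mem_arcIdeal
    {𝔡 : Derivation 𝕜 (MvPolynomial σ 𝕜 ⧸ I) (MvPolynomial σ 𝕜 ⧸ I)} {q : σ → MvPolynomial σ 𝕜}
    (hq : ∀ i, Ideal.Quotient.mk I (q i) = 𝔡 (Ideal.Quotient.mk I (X i))) (k : ℕ)
    {a : MvPolynomial (σ × ℕ) 𝕜} (ha : a ∈ arcIdeal (I : Set (MvPolynomial σ 𝕜))) :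
    arcDerivation k q a ∈ arcIdeal (I : Set (MvPolynomial σ 𝕜)) := by
  refine (arcDerivation k q).map_mem_ideal_span ?_ ha
  rintro _ ⟨f, hf, n, rfl⟩
  rw [arcDerivation_arcCoeff]
  split_ifs
  · refine arcCoeff_mem_arcIdeal ?_ _
    rw [SetLike.mem_coe, ← Ideal.Quotient.eq_zero_iff_mem, mk_mkDerivation hq,
      Ideal.Quotient.eq_zero_iff_mem.mpr hf, map_zero]
  · exact zero_mem _

end ArcQuotient

section IsArcCurrentLift

variable {𝕜 : Type*} [Field 𝕜] {m : ℕ} {I : Ideal (MvPolynomial (Fin m) 𝕜)}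

lemma exists_isArcCurrentLift
    (𝔡 : Derivation 𝕜 (MvPolynomial (Fin m) 𝕜 ⧸ I) (MvPolynomial (Fin m) 𝕜 ⧸ I)) (k : ℕ) :
    ∃ D, IsArcCurrentLift I 𝔡 k D := by
  choose q hq using fun i => Ideal.Quotient.mk_surjective (𝔡 (Ideal.Quotient.mk I (X i)))
  refine ⟨Derivation.liftOfSurjective (Ideal.Quotient.mkₐ_surjective 𝕜 _)
    (d := arcDerivation k q) fun a ha => ?_, fun p r j hr => ?_⟩
  · rw [Ideal.Quotient.mkₐ_eq_mk, Ideal.Quotient.eq_zero_iff_mem] at ha ⊢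
    exact arcDerivation_mem_arcIdeal hq k ha
  · refine (Derivation.liftOfSurjective_apply _ _ (arcCoeff p j)).trans ?_
    rw [Ideal.Quotient.mkₐ_eq_mk, arcDerivation_arcCoeff]
    split_ifs
    · exact mk_arcCoeff_eq_of_mk_eq ((mk_mkDerivation hq p).trans hr.symm) _
    · exact map_zero _

variable {𝔡 𝔡₁ 𝔡₂ : Derivation 𝕜 (MvPolynomial (Fin m) 𝕜 ⧸ I) (MvPolynomial (Fin m) 𝕜 ⧸ I)}
  {k k₁ k₂ : ℕ}
  {D D' D₁ D₂ : Derivation 𝕜 (MvPolynomial (Fin m × ℕ) 𝕜 ⧸ arcIdeal (I : Set _))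
    (MvPolynomial (Fin m × ℕ) 𝕜 ⧸ arcIdeal (I : Set _))}

lemma IsArcCurrentLift.unique (hD : IsArcCurrentLift I 𝔡 k D)
    (hD' : IsArcCurrentLift I 𝔡 k D') : D = D' := by
  refine MvPolynomial.derivation_quotient_ext fun ⟨i, j⟩ => ?_
  obtain ⟨q, hq⟩ := Ideal.Quotient.mk_surjective (𝔡 (Ideal.Quotient.mk I (X i)))
  rw [← arcCoeff_X (𝕜 := 𝕜) i j, hD (X i) q j hq, hD' (X i) q j hq]

lemma IsArcCurrentLift.apply_apply (h₁ : IsArcCurrentLift I 𝔡₁ k₁ D₁)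
    (h₂ : IsArcCurrentLift I 𝔡₂ k₂ D₂) {p q r : MvPolynomial (Fin m) 𝕜}
    (hq : Ideal.Quotient.mk I q = 𝔡₂ (Ideal.Quotient.mk I p))
    (hr : Ideal.Quotient.mk I r = 𝔡₁ (Ideal.Quotient.mk I q)) (j : ℕ) :
    D₁ (D₂ (Ideal.Quotient.mk _ (arcCoeff p j))) =
      if k₂ + k₁ ≤ j then Ideal.Quotient.mk _ (arcCoeff r (j - (k₂ + k₁))) else 0 := by
  by_cases hj : k₂ ≤ j
  · rw [h₂ p q j hq, if_pos hj, h₁ q r _ hr, Nat.sub_sub]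
    split_ifs <;> first | rfl | omega
  · rw [h₂ p q j hq, if_neg hj, map_zero, if_neg (by omega)]

lemma IsArcCurrentLift.commutator (h₁ : IsArcCurrentLift I 𝔡₁ k₁ D₁)
    (h₂ : IsArcCurrentLift I 𝔡₂ k₂ D₂) :
    IsArcCurrentLift I ⁅𝔡₁, 𝔡₂⁆ (k₁ + k₂) ⁅D₁, D₂⁆ := by
  intro p q j hq
  obtain ⟨q₁, hq₁⟩ := Ideal.Quotient.mk_surjective (𝔡₁ (Ideal.Quotient.mk I p))
  obtain ⟨q₂, hq₂⟩ := Ideal.Quotient.mk_surjective (𝔡₂ (Ideal.Quotient.mk I p))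
  obtain ⟨q₁₂, hq₁₂⟩ := Ideal.Quotient.mk_surjective (𝔡₁ (Ideal.Quotient.mk I q₂))
  obtain ⟨q₂₁, hq₂₁⟩ := Ideal.Quotient.mk_surjective (𝔡₂ (Ideal.Quotient.mk I q₁))
  have hq' : Ideal.Quotient.mk I q = Ideal.Quotient.mk I (q₁₂ - q₂₁) := by
    rw [hq, map_sub, hq₁₂, hq₂₁, hq₁, hq₂, Derivation.commutator_apply]
  rw [Derivation.commutator_apply, h₁.apply_apply h₂ hq₂ hq₁₂, h₂.apply_apply h₁ hq₁ hq₂₁,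
    add_comm k₂ k₁]
  split_ifs
  · rw [mk_arcCoeff_eq_of_mk_eq hq', arcCoeff_sub, map_sub]
  · exact sub_zero 0

end IsArcCurrentLift

/-- For a derivation `𝔡` of `R = 𝕜[X₁,…,X_m]/I` and `k ≥ 0` there is a unique
derivation `𝔡^{(k)}` of `J^∞(R)` with `𝔡^{(k)}(r^{(j)}) = (𝔡 r)^{(j−k)}`; moreover
`[𝔡₁^{(k₁)}, 𝔡₂^{(k₂)}] = [𝔡₁,𝔡₂]^{(k₁+k₂)}`, so the current Lie algebra
`Der(R)[s]` acts on `J^∞(R)` by derivations. -/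
theorem current_algebra_action_on_arc_ring
    (𝕜 : Type*) [Field 𝕜] (m : ℕ) (I : Ideal (MvPolynomial (Fin m) 𝕜)) :
    (∀ (𝔡 : Derivation 𝕜 (MvPolynomial (Fin m) 𝕜 ⧸ I) (MvPolynomial (Fin m) 𝕜 ⧸ I))
        (k : ℕ), ∃! D, IsArcCurrentLift I 𝔡 k D) ∧
    (∀ (𝔡₁ 𝔡₂ : Derivation 𝕜 (MvPolynomial (Fin m) 𝕜 ⧸ I) (MvPolynomial (Fin m) 𝕜 ⧸ I))
        (k₁ k₂ : ℕ) D₁ D₂ D₃,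
        IsArcCurrentLift I 𝔡₁ k₁ D₁ → IsArcCurrentLift I 𝔡₂ k₂ D₂ →
        IsArcCurrentLift I ⁅𝔡₁, 𝔡₂⁆ (k₁ + k₂) D₃ →
        ⁅D₁, D₂⁆ = D₃) := by
  refine ⟨fun 𝔡 k => ?_, fun _ _ _ _ _ _ _ h₁ h₂ h₃ => (h₁.commutator h₂).unique h₃⟩
  obtain ⟨D, hD⟩ := exists_isArcCurrentLift 𝔡 k
  exact ⟨D, hD, fun _ hD' => hD'.unique hD⟩
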